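/- arXiv:2402.07015 — 7 statements merged into one kernel-verified Lean document; each statement's English description precedes it below -/
import Mathlib

section
/- The Thue–Morse sequence is overlap-free: there do not exist natural numbers i and n with n ≥ 1 such that t (i + j) = t (i + n + j) for all j ≤ n (i.e., no word of the form BBb occurs in t, where B is a nonempty block and b is its first letter). -/
/-- The Thue–Morse sequence: `t n = true` iff the number of 1s in the
binary expansion of `n` is odd. -/
def thueMorse (n : ℕ) : Bool := (Nat.digits 2 n).count 1 % 2 == 1

lemma tm_two_mul (n : ℕ) : thueMorse (2 * n) = thueMorse n := by
  rcases Nat.eq_zero_or_pos n with h | h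
  · simp [h]
  · unfold thueMorse
    rw [Nat.digits_def' (by norm_num : 1 < 2) (by omega)]
    have h1 : 2 * n % 2 = 0 := by omega
    have h2 : 2 * n / 2 = n := by omega
    rw [h1, h2]
    simp

lemma tm_two_mul_add_one (n : ℕ) : thueMorse (2 * n + 1) = !thueMorse n := by
  unfold thueMorse
  rw [Nat.digits_def' (by norm_num : 1 < 2) (by omega)]
  have h1 : (2 * n + 1) % 2 = 1 := by omega
  have h2 : (2 * n + 1) / 2 = n := by omega
  rw [h1, h2]
  rcases Nat.mod_two_eq_zero_or_one ((Nat.digits 2 n).count 1) with h | h <;>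
    simp [List.count_cons, Nat.add_mod, h]

lemma tm_ne_of_even (m : ℕ) (hm : m % 2 = 0) : thueMorse m ≠ thueMorse (m + 1) := by
  obtain ⟨k, hk⟩ : ∃ k, m = 2 * k := ⟨m / 2, by omega⟩
  subst hk
  rw [tm_two_mul, tm_two_mul_add_one]
  cases thueMorse k <;> simp

lemma tm_odd_of_eq_succ (m : ℕ) (h : thueMorse m = thueMorse (m + 1)) : m % 2 = 1 := by
  rcases Nat.mod_two_eq_zero_or_one m with hm | hm
  · exact absurd h (tm_ne_of_even m hm)
  · exact hm

lemma tm_key : ∀ n, 1 ≤ n → ∀ i, ¬ (∀ j ≤ n, thueMorse (i + j) = thueMorse (i + n + j)) := by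
  intro n
  induction n using Nat.strong_induction_on with
  | _ n IH =>
    intro hn i h
    rcases Nat.even_or_odd n with ⟨m, hm⟩ | ⟨m, hm⟩
    · -- n = m + m, even case: halve the overlap
      have hm1 : 1 ≤ m := by omega
      rcases Nat.even_or_odd i with ⟨a, ha⟩ | ⟨a, ha⟩
      · refine IH m (by omega) hm1 a (fun j hj => ?_)
        have e1 : thueMorse (a + j) = thueMorse (i + 2 * j) := by
          rw [← tm_two_mul (a + j)]; congr 1; omega
        have e2 : thueMorse (a + m + j) = thueMorse (i + n + 2 * j) := by
          rw [← tm_two_mul (a + m + j)]; congr 1; omega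
        rw [e1, e2]
        exact h (2 * j) (by omega)
      · refine IH m (by omega) hm1 a (fun j hj => ?_)
        have e1 : thueMorse (i + 2 * j) = !thueMorse (a + j) := by
          rw [← tm_two_mul_add_one (a + j)]; congr 1; omega
        have e2 : thueMorse (i + n + 2 * j) = !thueMorse (a + m + j) := by
          rw [← tm_two_mul_add_one (a + m + j)]; congr 1; omega
        have := h (2 * j) (by omega)
        rw [e1, e2] at this
        cases hb : thueMorse (a + j) <;> cases hc : thueMorse (a + m + j) <;>
          simp_all
    · -- n odd: derive a doubled letter in both blocks, contradiction on parity
      have key0 : ∃ j, j < n ∧ thueMorse (i + j) = thueMorse (i + j + 1) := by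
        by_contra hc
        push_neg at hc
        have alt : ∀ j, j ≤ n →
            thueMorse (i + j) = ((decide (j % 2 = 1)).xor (thueMorse i)) := by
          intro j
          induction j with
          | zero => simp
          | succ k ihk =>
            intro hk
            have hk' := ihk (by omega)
            have hne := hc k (by omega)
            have hstep : thueMorse (i + (k + 1)) = !thueMorse (i + k) := by
              have e : i + (k + 1) = i + k + 1 := by omega
              rw [e]
              cases h1 : thueMorse (i + k) <;> cases h2 : thueMorse (i + k + 1) <;>
                simp_all
            rw [hstep, hk']
            rcases Nat.mod_two_eq_zero_or_one k with hp | hp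
            · have hp1 : (k + 1) % 2 = 1 := by omega
              simp [hp, hp1]
            · have hp0 : (k + 1) % 2 = 0 := by omega
              simp [hp, hp0]
        have h1 := alt n le_rfl
        have h2 := h 0 (by omega)
        simp only [Nat.add_zero] at h2
        have hn1 : n % 2 = 1 := by omega
        rw [hn1] at h1
        rw [← h2] at h1
        cases hb : thueMorse i <;> rw [hb] at h1 <;> simp at h1
      obtain ⟨j0, hj0, heq⟩ := key0
      have odd1 : (i + j0) % 2 = 1 := tm_odd_of_eq_succ _ heq
      have heq2 : thueMorse (i + n + j0) = thueMorse (i + n + j0 + 1) := by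
        have ha := h j0 (by omega)
        have hb := h (j0 + 1) (by omega)
        have e : i + (j0 + 1) = i + j0 + 1 := by omega
        have e' : i + n + (j0 + 1) = i + n + j0 + 1 := by omega
        rw [e, e'] at hb
        rw [← ha, heq, hb]
      have odd2 : (i + n + j0) % 2 = 1 := tm_odd_of_eq_succ _ heq2
      omega

/-- The Thue–Morse sequence is overlap-free: no word of the form `BBb` occurs. -/
theorem thueMorse_overlapFree :
    ¬ ∃ (i n : ℕ), 1 ≤ n ∧ ∀ j ≤ n, thueMorse (i + j) = thueMorse (i + n + j) := by
  rintro ⟨i, n, hn, h⟩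
  exact tm_key n hn i h
end

section
/- Misaligned occurrences of x_k happen only at the centers of blocks y_k y_k: for every k ≥ 1 and every p : ℕ, if t (p + j) = t j for all j < 2^k (i.e., the block of length 2^k at position p is similar to the initial block x_k) and 2^k does not divide p, then there exists m : ℕ with p = 2^k * m + 2^(k-1), t (2^k * m) = true, and t (2^k * (m + 1)) = true (i.e., p is the exact center of two consecutive partition blocks both equal to y_k, the complement of x_k). -/
lemma tm_zero : thueMorse 0 = false := by simp [thueMorse]

lemma tm_one : thueMorse 1 = true := by
  have := tm_two_mul_add_one 0
  simpa [tm_zero] using this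

/-- A misaligned occurrence `x'_k` of the initial block `x_k` occurs only at
the exact center of a block `y_k y_k` formed by two consecutive partition
blocks both equal to the complement `y_k`. -/
theorem thueMorse_misaligned_xk (k : ℕ) (hk : 1 ≤ k) (p : ℕ)
    (hsim : ∀ j < 2 ^ k, thueMorse (p + j) = thueMorse j)
    (hnd : ¬ (2 ^ k ∣ p)) :
    ∃ m : ℕ, p = 2 ^ k * m + 2 ^ (k - 1) ∧
      thueMorse (2 ^ k * m) = true ∧ thueMorse (2 ^ k * (m + 1)) = true := by
  induction k generalizing p with
  | zero => omega
  | succ k ih =>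
    rcases Nat.eq_zero_or_pos k with rfl | hk1
    · -- base case k = 1
      have h2 : (2:ℕ) ^ 1 = 2 := by norm_num
      rcases Nat.even_or_odd p with hp | ⟨q, hq⟩
      · exact absurd (by simpa [h2] using hp.two_dvd) (by simpa [h2] using hnd)
      · refine ⟨q, by omega, ?_, ?_⟩
        · have h0 := hsim 0 (by norm_num)
          rw [hq, Nat.add_zero, tm_two_mul_add_one, tm_zero] at h0
          have hq' : thueMorse q = true := by
            cases htq : thueMorse q <;> simp [htq] at h0 ⊢
          simpa [h2, tm_two_mul] using hq'
        · have h1 := hsim 1 (by norm_num)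
          have : p + 1 = 2 * (q + 1) := by omega
          rw [this, tm_two_mul, tm_one] at h1
          simpa [h2, tm_two_mul] using h1
    · -- inductive step: k + 1 with k ≥ 1, so 2^(k+1) ≥ 4
      have hpow : 4 ≤ 2 ^ (k + 1) := by
        calc (4:ℕ) = 2 ^ 2 := by norm_num
        _ ≤ 2 ^ (k + 1) := Nat.pow_le_pow_right (by norm_num) (by omega)
      rcases Nat.even_or_odd p with ⟨q, hq⟩ | ⟨q, hq⟩
      · -- p = 2q
        have hq2 : p = 2 * q := by omega
        have hsim' : ∀ j < 2 ^ k, thueMorse (q + j) = thueMorse j := by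
          intro j hj
          have h2j : 2 * j < 2 ^ (k + 1) := by
            rw [pow_succ]; omega
          have := hsim (2 * j) h2j
          rw [hq2, show 2 * q + 2 * j = 2 * (q + j) by ring,
              tm_two_mul, tm_two_mul] at this
          exact this
        have hnd' : ¬ (2 ^ k ∣ q) := by
          intro ⟨c, hc⟩
          exact hnd ⟨c, by rw [hq2, hc, pow_succ]; ring⟩
        obtain ⟨m, hm, h1, h2⟩ := ih hk1 q hsim' hnd'
        refine ⟨m, ?_, ?_, ?_⟩
        · have hk2 : 2 * 2 ^ (k - 1) = 2 ^ k := by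
            rw [← pow_succ']; congr 1; omega
          have hpk : p = 2 * (2 ^ k * m) + 2 * 2 ^ (k - 1) := by
            rw [hq2, hm]; ring
          rw [show k + 1 - 1 = k from rfl, hpk, hk2, pow_succ]; ring
        · rw [show 2 ^ (k + 1) * m = 2 * (2 ^ k * m) by rw [pow_succ]; ring,
              tm_two_mul]; exact h1
        · rw [show 2 ^ (k + 1) * (m + 1) = 2 * (2 ^ k * (m + 1)) by rw [pow_succ]; ring,
              tm_two_mul]; exact h2
      · -- p = 2q + 1 : contradiction
        exfalso
        have ha := hsim 1 (by omega)
        have hb := hsim 2 (by omega)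
        rw [show p + 1 = 2 * (q + 1) by omega, tm_two_mul, tm_one] at ha
        rw [show p + 2 = 2 * (q + 1) + 1 by omega, tm_two_mul_add_one,
            show (2:ℕ) = 2 * 1 by norm_num, tm_two_mul, tm_one, ha] at hb
        simp at hb
end

section
/- Every block of the Thue–Morse sequence occurs infinitely many times: for all i, n, N : ℕ there exists p > N such that t (p + j) = t (i + j) for all j < n. -/
theorem thueMorse_add_two_pow_mul {r k : ℕ} (hr : r < 2 ^ k) (a : ℕ) :
    thueMorse (r + 2 ^ k * a) = xor (thueMorse r) (thueMorse a) := by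
  rcases Nat.eq_zero_or_pos a with rfl | ha
  · simp [thueMorse]
  have hlen : (Nat.digits 2 r).length ≤ k := (Nat.digits_length_le_iff one_lt_two r).2 hr
  obtain ⟨z, rfl⟩ := Nat.exists_eq_add_of_le hlen
  rw [thueMorse, ← Nat.digits_append_zeroes_append_digits one_lt_two ha, List.count_append,
    List.count_append, List.count_replicate, if_neg (by decide), add_zero, Nat.add_mod]
  unfold thueMorse
  rcases Nat.mod_two_eq_zero_or_one ((Nat.digits 2 r).count 1) with h | h <;>
    rcases Nat.mod_two_eq_zero_or_one ((Nat.digits 2 a).count 1) with h' | h' <;>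
    simp [h, h']

/-- Every block of the Thue–Morse sequence occurs infinitely many times. -/
theorem thueMorse_block_recurs (i n N : ℕ) :
    ∃ p > N, ∀ j < n, thueMorse (p + j) = thueMorse (i + j) := by
  obtain ⟨k, hk⟩ : ∃ k, N + i + n < 2 ^ k := ⟨N + i + n, Nat.lt_two_pow_self⟩
  have h3 : thueMorse 3 = false := by decide
  refine ⟨i + 2 ^ k * 3, by omega, fun j hj => ?_⟩
  rw [add_right_comm, thueMorse_add_two_pow_mul (by omega), h3, Bool.xor_false]
end

section
/- The gap sequence of the Thue–Morse sequence equals the first-digit-replacement sequence up to the permutation 0 ↦ 2, 1 ↦ 0, 2 ↦ 1 of letters: for every n : ℕ, ν n = (ϑ n + 2) % 3, where ν n = z (n+1) − z n − 1 with z the strictly increasing enumeration of the positions of false in t, and ϑ n = 2 if t n = t (n+1), ϑ n = 1 if t n = true ≠ t (n+1), and ϑ n = 0 if t n = false ≠ t (n+1). -/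
/-- The strictly monotone enumeration of the positions of `false` (0)
in the Thue–Morse sequence. -/
noncomputable def zeroPos : ℕ → ℕ := Nat.nth (fun n => thueMorse n = false)

/-- Thue's three-letter sequence `ν`, recording the number of 1s between
consecutive 0s of the Thue–Morse sequence. -/
noncomputable def nu (n : ℕ) : ℕ := zeroPos (n + 1) - zeroPos n - 1

/-- The sequence `ϑ` obtained from the Thue–Morse sequence by replacing
the first digit of each factor 00 or 11 by 2. -/
def vartheta (n : ℕ) : ℕ :=
  if thueMorse n = thueMorse (n + 1) then 2 else (if thueMorse n then 1 else 0)

lemma count_two_mul (n : ℕ) :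
    Nat.count (fun m => thueMorse m = false) (2 * n) = n := by
  induction n with
  | zero => simp
  | succ k ih =>
    have h : 2 * (k + 1) = (2 * k + 1) + 1 := by ring
    rw [h, Nat.count_succ, Nat.count_succ, ih]
    simp only [tm_two_mul, tm_two_mul_add_one]
    cases thueMorse k <;> simp

lemma zeroPos_eq (n : ℕ) :
    zeroPos n = 2 * n + (if thueMorse n then 1 else 0) := by
  have hp : thueMorse (2 * n + (if thueMorse n then 1 else 0)) = false := by
    cases h : thueMorse n <;> simp [h, tm_two_mul, tm_two_mul_add_one]
  have hc : Nat.count (fun m => thueMorse m = false)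
      (2 * n + (if thueMorse n then 1 else 0)) = n := by
    cases h : thueMorse n
    · simpa [h] using count_two_mul n
    · simp [h, Nat.count_succ, count_two_mul, tm_two_mul]
  have := Nat.nth_count (p := fun m => thueMorse m = false) hp
  rw [hc] at this
  exact this

/-- The gap sequence `ν` equals `ϑ` up to the permutation 0 ↦ 2, 1 ↦ 0, 2 ↦ 1. -/
theorem nu_eq_vartheta_perm (n : ℕ) : nu n = (vartheta n + 2) % 3 := by
  unfold nu vartheta
  rw [zeroPos_eq, zeroPos_eq]
  cases h1 : thueMorse n <;> cases h2 : thueMorse (n + 1) <;>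
    simp [h1, h2] <;> omega
end

section
/- The orbit closure of the Thue–Morse sequence under the shift map contains no periodic points: for every x in closure {σ^[k] t | k : ℕ} and every n ≥ 1, σ^[n] x ≠ x. -/
/-- The shift map on the one-sided binary full shift. -/
def shift (x : ℕ → Bool) : ℕ → Bool := fun n => x (n + 1)

lemma tm_even (m : ℕ) : thueMorse (2*m) = thueMorse m := by
  rcases Nat.eq_zero_or_pos m with h | h
  · simp [h]
  · unfold thueMorse
    rw [Nat.digits_def' (by norm_num) (by omega)]
    have h1 : (2*m) % 2 = 0 := by omega
    have h2 : (2*m) / 2 = m := by omega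
    rw [h1, h2, List.count_cons]
    simp

lemma parity_key (a : ℕ) : (((a+1) % 2 == 1) : Bool) = !(a % 2 == 1) := by
  rcases Nat.even_or_odd a with ⟨c, hc⟩ | ⟨c, hc⟩ <;> subst hc
  · rw [show (c+c+1)%2 = 1 by omega, show (c+c)%2 = 0 by omega]; rfl
  · rw [show (2*c+1+1)%2 = 0 by omega, show (2*c+1)%2 = 1 by omega]; rfl

lemma tm_odd (m : ℕ) : thueMorse (2*m+1) = !thueMorse m := by
  unfold thueMorse
  rw [Nat.digits_def' (by norm_num) (by omega)]
  have h1 : (2*m+1) % 2 = 1 := by omega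
  have h2 : (2*m+1) / 2 = m := by omega
  rw [h1, h2, List.count_cons]
  simp only [beq_self_eq_true, if_pos, if_true]
  exact parity_key _

lemma tm_ne (m : ℕ) : thueMorse (2*m) ≠ thueMorse (2*m+1) := by
  rw [tm_even, tm_odd]
  cases thueMorse m <;> simp

lemma tm_e (m : ℕ) : thueMorse (4*m+1) = thueMorse (4*m+2) := by
  have h1 : 4*m+1 = 2*(2*m)+1 := by ring
  have h2 : 4*m+2 = 2*(2*m+1) := by ring
  rw [h1, h2, tm_odd, tm_even, tm_even, tm_odd]

lemma tm_no_overlap : ∀ p, 1 ≤ p → ∀ k, ¬ (∀ i ≤ p, thueMorse (k+i) = thueMorse (k+i+p)) := by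
  intro p
  induction p using Nat.strong_induction_on with
  | _ p IH =>
    intro hp k H
    rcases Nat.even_or_odd p with ⟨q, hq⟩ | ⟨q, hq⟩
    · -- p = q + q even, q ≥ 1; reduce to period q
      have hq1 : 1 ≤ q := by omega
      rcases Nat.even_or_odd k with ⟨a, ha⟩ | ⟨a, ha⟩
      · apply IH q (by omega) hq1 a
        intro i hi
        have e1 : a + i = 2*(a+i)/2 := by omega
        have := H (2*i) (by omega)
        rw [show k + 2*i + p = 2*(a+i+q) by omega, show k + 2*i = 2*(a+i) by omega,
          tm_even, tm_even] at this
        exact this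
      · apply IH q (by omega) hq1 a
        intro i hi
        have := H (2*i) (by omega)
        rw [show k + 2*i + p = 2*(a+i+q)+1 by omega, show k + 2*i = 2*(a+i)+1 by omega,
          tm_odd, tm_odd] at this
        exact Bool.not_inj this
    · -- p odd
      rcases Nat.eq_or_lt_of_le hp with h1 | h3
      · -- p = 1 : three consecutive equal values
        have e0 := H 0 (by omega)
        have e1 := H 1 (by omega)
        rcases Nat.even_or_odd k with ⟨a, ha⟩ | ⟨a, ha⟩
        · exact tm_ne a (by rw [show 2*a+1 = k+0+p by omega, show 2*a = k+0 by omega]; exact e0)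
        · exact tm_ne (a+1)
            (by rw [show 2*(a+1)+1 = k+1+p by omega, show 2*(a+1) = k+1 by omega]; exact e1)
      · -- p odd ≥ 3
        set m := (k+2)/4 with hm
        have hj : k ≤ 4*m+1 ∧ 4*m+1 ≤ k+3 := by omega
        set j := 4*m+1 with hjdef
        have he : thueMorse j = thueMorse (j+1) := by
          have := tm_e m; rw [show 4*m+2 = j+1 by omega] at this; exact this
        by_cases hcase : j ≤ k + p - 1
        · -- use positions j, j+1 within [k, k+p]
          have hA := H (j - k) (by omega)
          have hB := H (j - k + 1) (by omega)
          rw [show k + (j-k) + p = j + p by omega, show k + (j-k) = j by omega] at hA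
          rw [show k + (j-k+1) + p = j+1+p by omega, show k + (j-k+1) = j+1 by omega] at hB
          -- j + p is even
          obtain ⟨c, hc⟩ : ∃ c, j + p = 2*c := ⟨(j+p)/2, by omega⟩
          apply tm_ne c
          rw [show 2*c+1 = j+1+p by omega, ← hc, ← hA, ← hB, he]
        · -- j ≥ k + p, use positions j-p, j-p+1
          have hjp : k ≤ j - p ∧ j - p ≤ k + p - 1 := by omega
          have hA := H (j - p - k) (by omega)
          have hB := H (j - p - k + 1) (by omega)
          rw [show k + (j-p-k) + p = j by omega, show k + (j-p-k) = j - p by omega] at hA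
          rw [show k + (j-p-k+1) + p = j+1 by omega, show k + (j-p-k+1) = j-p+1 by omega] at hB
          obtain ⟨c, hc⟩ : ∃ c, j - p = 2*c := ⟨(j-p)/2, by omega⟩
          apply tm_ne c
          rw [show 2*c+1 = j-p+1 by omega, ← hc, hA, hB, he]

lemma shift_iter (k : ℕ) (x : ℕ → Bool) : shift^[k] x = fun n => x (n + k) := by
  induction k with
  | zero => simp
  | succ k ih =>
    rw [Function.iterate_succ_apply', ih]
    funext n
    simp [shift]
    congr 1
    omega

/-- The orbit closure of the Thue–Morse sequence under the shift map contains
no periodic points. -/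
theorem thueMorse_orbitClosure_no_periodic_points :
    ∀ x ∈ closure {x : ℕ → Bool | ∃ k : ℕ, shift^[k] thueMorse = x},
      ∀ n : ℕ, 1 ≤ n → shift^[n] x ≠ x := by
  intro x hx n hn hper
  have hx' : ∀ j, x (j + n) = x j := by
    intro j
    conv_rhs => rw [← hper]
    rw [shift_iter]
  -- the basic open set fixing the first 2n+1 coordinates
  set U : Set (ℕ → Bool) := {y | ∀ j ∈ Finset.range (2*n+1), y j = x j} with hUdef
  have hUopen : IsOpen U := by
    have : U = ⋂ j ∈ Finset.range (2*n+1), (fun y : ℕ → Bool => y j) ⁻¹' {x j} := by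
      ext y; simp [hUdef]
    rw [this]
    exact isOpen_biInter_finset fun j _ =>
      (continuous_apply j).isOpen_preimage _ (isOpen_discrete _)
  have hxU : x ∈ U := fun j _ => rfl
  obtain ⟨y, hyU, k, hk⟩ := mem_closure_iff.mp hx U hUopen hxU
  have hty : ∀ j < 2*n+1, thueMorse (j + k) = x j := by
    intro j hj
    have := hyU j (Finset.mem_range.mpr hj)
    rw [← hk, shift_iter] at this
    exact this
  apply tm_no_overlap n hn k
  intro i hi
  have h1 : thueMorse (k + i) = x i := by
    rw [show k + i = i + k by omega]; exact hty i (by omega)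
  have h2 : thueMorse (k + i + n) = x (i + n) := by
    rw [show k + i + n = (i + n) + k by omega]; exact hty (i+n) (by omega)
  rw [h1, h2, hx']
end

section
/- The orbit closure of the Thue–Morse sequence under the shift map is minimal: if K is a nonempty closed subset of O := closure {σ^[k] t | k : ℕ} with σ '' K ⊆ K, then K = O. -/
open Set Function PiNat

theorem mem_closure_iff_forall_exists_agree {α : Type*} [TopologicalSpace α] [DiscreteTopology α]
    {S : Set (ℕ → α)} {x : ℕ → α} :
    x ∈ closure S ↔ ∀ n, ∃ y ∈ S, ∀ i < n, y i = x i := by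
  rw [(isTopologicalBasis_cylinders fun _ => α).mem_closure_iff]
  constructor
  · intro h n
    obtain ⟨y, hy, hyS⟩ := h _ ⟨x, n, rfl⟩ (self_mem_cylinder x n)
    exact ⟨y, hyS, mem_cylinder_iff.1 hy⟩
  · rintro h _ ⟨z, n, rfl⟩ hx
    obtain ⟨y, hyS, hy⟩ := h n
    rw [mem_cylinder_iff_eq] at hx
    exact ⟨y, hx ▸ mem_cylinder_iff.2 hy, hyS⟩

section Minimal

variable {X : Type*} [TopologicalSpace X] {f : X → X} {K : Set X}

theorem closure_range_iterate_subset (hK : IsClosed K) (hf : MapsTo f K K) {x : X} (hx : x ∈ K) :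
    closure (range fun k => f^[k] x) ⊆ K :=
  hK.closure_subset_iff.2 <| range_subset_iff.2 fun k => hf.iterate k hx

theorem eq_closure_range_iterate_of_forall_mem {y : X}
    (hrec : ∀ x ∈ closure (range fun k => f^[k] y), y ∈ closure (range fun k => f^[k] x))
    (hKy : K ⊆ closure (range fun k => f^[k] y)) (hne : K.Nonempty) (hK : IsClosed K)
    (hf : MapsTo f K K) :
    K = closure (range fun k => f^[k] y) := by
  obtain ⟨x, hx⟩ := hne
  exact hKy.antisymm <| closure_range_iterate_subset hK hf <|
    closure_range_iterate_subset hK hf hx (hrec x (hKy hx))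

end Minimal

theorem shift_iterate_apply (k : ℕ) (x : ℕ → Bool) (i : ℕ) : shift^[k] x i = x (k + i) := by
  induction k generalizing x with
  | zero => simp
  | succ k ih =>
    rw [iterate_succ_apply, ih]
    simp only [shift]
    ac_rfl

def UniformlyRecurrent {α : Type*} (u : ℕ → α) : Prop :=
  ∀ n, ∃ L, ∀ m, ∃ j ∈ Icc m (m + L), ∀ i < n, u (j + i) = u i

theorem UniformlyRecurrent.mem_closure_range_iterate_shift {u : ℕ → Bool}
    (hu : UniformlyRecurrent u) {x : ℕ → Bool} (hx : x ∈ closure (range fun k => shift^[k] u)) :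
    u ∈ closure (range fun k => shift^[k] x) := by
  rw [mem_closure_iff_forall_exists_agree] at hx ⊢
  intro n
  obtain ⟨L, hL⟩ := hu n
  obtain ⟨_, ⟨m, rfl⟩, hxu⟩ := hx (L + n)
  obtain ⟨j, ⟨hmj, hjm⟩, hju⟩ := hL m
  refine ⟨shift^[j - m] x, mem_range_self _, fun i hi => ?_⟩
  dsimp only at hxu
  rw [shift_iterate_apply, ← hxu _ (by omega), shift_iterate_apply, ← hju i hi]
  congr 1
  omega

theorem thueMorse_eq_bodd (n : ℕ) : thueMorse n = ((Nat.digits 2 n).count 1).bodd := by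
  simp [thueMorse, Nat.mod_two_of_bodd]

theorem thueMorse_two_pow_mul_add {a i : ℕ} (hi : i < 2 ^ a) (k : ℕ) :
    thueMorse (2 ^ a * k + i) = xor (thueMorse k) (thueMorse i) := by
  rcases k.eq_zero_or_pos with rfl | hk
  · simp [thueMorse]
  have hlen : (Nat.digits 2 i).length ≤ a := (Nat.digits_length_le_iff (by norm_num) i).2 hi
  have hdigits := Nat.digits_append_zeroes_append_digits (b := 2)
    (k := a - (Nat.digits 2 i).length) (n := i) (by norm_num) hk
  rw [Nat.add_sub_cancel' hlen] at hdigits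
  simp [thueMorse_eq_bodd, add_comm _ i, ← hdigits, List.count_replicate, Nat.bodd_add,
    Bool.xor_comm]

theorem thueMorse_two_mul_add_one (n : ℕ) : thueMorse (2 * n + 1) = !thueMorse (2 * n) := by
  have h₁ := thueMorse_two_pow_mul_add (a := 1) (i := 1) (by norm_num) n
  have h₀ := thueMorse_two_pow_mul_add (a := 1) (i := 0) (by norm_num) n
  simp_all [thueMorse]

theorem exists_mem_Icc_thueMorse_eq_false (m : ℕ) : ∃ k ∈ Icc m (m + 2), thueMorse k = false := by
  have h := thueMorse_two_mul_add_one ((m + 1) / 2)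
  cases hk : thueMorse (2 * ((m + 1) / 2))
  · exact ⟨2 * ((m + 1) / 2), ⟨by omega, by omega⟩, hk⟩
  · exact ⟨2 * ((m + 1) / 2) + 1, ⟨by omega, by omega⟩, by rw [h, hk]; rfl⟩

theorem thueMorse_uniformlyRecurrent : UniformlyRecurrent thueMorse := by
  intro n
  refine ⟨3 * 2 ^ n, fun m => ?_⟩
  have hpos : 0 < 2 ^ n := by positivity
  obtain ⟨k, ⟨hk₁, hk₂⟩, hk⟩ := exists_mem_Icc_thueMorse_eq_false (m / 2 ^ n + 1)
  refine ⟨2 ^ n * k, ⟨?_, ?_⟩, fun i hi => ?_⟩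
  · exact (Nat.lt_mul_div_succ m hpos).le.trans (Nat.mul_le_mul_left _ hk₁)
  · calc 2 ^ n * k ≤ 2 ^ n * (m / 2 ^ n + 1 + 2) := Nat.mul_le_mul_left _ hk₂
      _ = 2 ^ n * (m / 2 ^ n) + 3 * 2 ^ n := by ring
      _ ≤ m + 3 * 2 ^ n := Nat.add_le_add_right (Nat.mul_div_le m _) _
  · rw [thueMorse_two_pow_mul_add (hi.trans n.lt_two_pow_self), hk, Bool.false_xor]

/-- The orbit closure of the Thue–Morse sequence under the shift map is
minimal: it has no proper nonempty closed shift-invariant subset. -/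
theorem thueMorse_orbitClosure_minimal :
    ∀ K : Set (ℕ → Bool),
      K ⊆ closure {x : ℕ → Bool | ∃ k : ℕ, shift^[k] thueMorse = x} →
      K.Nonempty → IsClosed K → shift '' K ⊆ K →
      K = closure {x : ℕ → Bool | ∃ k : ℕ, shift^[k] thueMorse = x} := fun _ hKt hne hK hshift =>
  eq_closure_range_iterate_of_forall_mem
    (fun _ => thueMorse_uniformlyRecurrent.mem_closure_range_iterate_shift) hKt hne hK
    (mapsTo_iff_image_subset.2 hshift)
end

section
/- The set of Morse-type minimal points is dense in the full binary shift: the set {x : ℕ → Bool | closure {σ^[k] x | k : ℕ} is minimal and uncountable} is dense in ℕ → Bool with the product topology. -/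
/-!
Fill the holes of the periodic pattern `w₀ … wₙ₋₁ ? w₀ … wₙ₋₁ ? …` with the period-doubling
sequence. The resulting point `x` starts with `w` and is regularly recurrent (every prefix of
`x` recurs along an arithmetic progression) but not periodic, because the period-doubling
sequence is not. Regular recurrence lets every point of the orbit closure of `x` approximate
`x` again under the shift, which is minimality. Together with aperiodicity it makes every orbit
point an accumulation point of the orbit, so the orbit closure is a nonempty perfect subset of
the Cantor space, hence uncountable.
-/

open Function Filter Topology PiNat

def IsRegularlyRecurrent {α : Type*} (x : ℕ → α) : Prop :=
  ∀ M, ∃ p > 0, ∀ i < M, ∀ j, x (i + j * p) = x i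

theorem IsRegularlyRecurrent.periodic_of_eventually {α : Type*} {x : ℕ → α}
    (hx : IsRegularlyRecurrent x) {r p : ℕ} (h : ∀ m ≥ r, x (m + p) = x m) : Periodic x p := by
  intro i
  obtain ⟨q, hq, hrep⟩ := hx (i + p + 1)
  have hr : r ≤ i + r * q := le_add_left (Nat.le_mul_of_pos_right r hq)
  calc x (i + p) = x (i + p + r * q) := (hrep _ (by omega) r).symm
    _ = x (i + r * q + p) := by rw [add_right_comm]
    _ = x (i + r * q) := h _ hr
    _ = x i := hrep i (by omega) r

-- `fillHoles w n y` is `w 0 … w (n-1) (y 0) w 0 … w (n-1) (y 1) …`.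
def fillHoles {α : Type*} (w : ℕ → α) (n : ℕ) (y : ℕ → α) (m : ℕ) : α :=
  if m % (n + 1) < n then w (m % (n + 1)) else y (m / (n + 1))

section fillHoles

variable {α : Type*}

theorem fillHoles_of_lt {w y : ℕ → α} {n i : ℕ} (hi : i < n) : fillHoles w n y i = w i := by
  simp [fillHoles, Nat.mod_eq_of_lt (Nat.lt_succ_of_lt hi), hi]

theorem fillHoles_hole (w : ℕ → α) (n : ℕ) (y : ℕ → α) (k : ℕ) :
    fillHoles w n y (n + (n + 1) * k) = y k := by
  have hmod : (n + (n + 1) * k) % (n + 1) = n := by simp [Nat.add_mul_mod_self_left]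
  have hdiv : (n + (n + 1) * k) / (n + 1) = k := by
    rw [Nat.add_mul_div_left _ _ n.succ_pos, Nat.div_eq_of_lt n.lt_succ_self, zero_add]
  simp [fillHoles, hmod, hdiv]

theorem isRegularlyRecurrent_fillHoles {y : ℕ → α} (hy : IsRegularlyRecurrent y) (w : ℕ → α)
    (n : ℕ) : IsRegularlyRecurrent (fillHoles w n y) := by
  intro M
  obtain ⟨p, hp, hrep⟩ := hy M
  refine ⟨p * (n + 1), Nat.mul_pos hp n.succ_pos, fun i hi j => ?_⟩
  have hmod : (i + j * (p * (n + 1))) % (n + 1) = i % (n + 1) := by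
    rw [← mul_assoc, Nat.add_mul_mod_self_right]
  have hdiv : (i + j * (p * (n + 1))) / (n + 1) = i / (n + 1) + j * p := by
    rw [← mul_assoc, Nat.add_mul_div_right _ _ n.succ_pos]
  simp only [fillHoles, hmod, hdiv, hrep _ ((Nat.div_le_self i _).trans_lt hi)]

theorem Function.Periodic.of_fillHoles {w y : ℕ → α} {n p : ℕ}
    (h : Periodic (fillHoles w n y) p) : Periodic y p := by
  intro k
  rw [← fillHoles_hole w n y, ← fillHoles_hole w n y, mul_add, ← add_assoc]
  exact h.nat_mul (n + 1) _

end fillHoles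

def periodDoubling (j : ℕ) : Bool :=
  if h : j % 2 = 0 then true else !periodDoubling (j / 2)
decreasing_by omega

theorem periodDoubling_two_mul (s : ℕ) : periodDoubling (2 * s) = true := by
  rw [periodDoubling]; simp

theorem periodDoubling_two_mul_add_one (s : ℕ) :
    periodDoubling (2 * s + 1) = !periodDoubling s := by
  rw [periodDoubling]; simp [show (2 * s + 1) / 2 = s by omega]

theorem periodDoubling_add_mul_two_pow {k t : ℕ} (ht : t < 2 ^ k - 1) (j : ℕ) :
    periodDoubling (t + j * 2 ^ k) = periodDoubling t := by
  induction k generalizing t with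
  | zero => simp at ht
  | succ k ih =>
    obtain ⟨s, rfl | rfl⟩ := Nat.even_or_odd' t
    · rw [show 2 * s + j * 2 ^ (k + 1) = 2 * (s + j * 2 ^ k) by ring, periodDoubling_two_mul,
        periodDoubling_two_mul]
    · have hs : s < 2 ^ k - 1 := by rw [pow_succ] at ht; omega
      rw [show 2 * s + 1 + j * 2 ^ (k + 1) = 2 * (s + j * 2 ^ k) + 1 by ring,
        periodDoubling_two_mul_add_one, periodDoubling_two_mul_add_one, ih hs]

theorem isRegularlyRecurrent_periodDoubling : IsRegularlyRecurrent periodDoubling := by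
  intro M
  refine ⟨2 ^ (M + 1), by positivity, fun i hi j => periodDoubling_add_mul_two_pow ?_ j⟩
  have := Nat.lt_two_pow_self (n := M + 1)
  omega

theorem periodDoubling_not_periodic {p : ℕ} (hp : 0 < p) : ¬ Periodic periodDoubling p := by
  induction p using Nat.strong_induction_on with
  | _ p ih =>
    intro h
    obtain ⟨q, rfl | rfl⟩ := Nat.even_or_odd' p
    · refine ih q (by omega) (by omega) fun j => ?_
      have := h (2 * j + 1)
      rwa [show 2 * j + 1 + 2 * q = 2 * (j + q) + 1 by ring, periodDoubling_two_mul_add_one,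
        periodDoubling_two_mul_add_one, Bool.not_inj_iff] at this
    · have := h (2 * q)
      rw [show 2 * q + (2 * q + 1) = 2 * (2 * q) + 1 by ring,
        periodDoubling_two_mul_add_one] at this
      simp only [periodDoubling_two_mul] at this
      exact Bool.not_ne_self true this

theorem PiNat.nhds_basis_cylinder {E : ℕ → Type*} [∀ n, TopologicalSpace (E n)]
    [∀ n, DiscreteTopology (E n)] (x : ∀ n, E n) :
    (𝓝 x).HasBasis (fun _ => True) (cylinder x) := by
  refine ⟨fun s => ⟨fun hs => ?_, fun ⟨n, _, hn⟩ =>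
    mem_of_superset ((isOpen_cylinder E x n).mem_nhds (self_mem_cylinder x n)) hn⟩⟩
  obtain ⟨_, ⟨y, n, rfl⟩, hxy, hys⟩ := (isTopologicalBasis_cylinders E).mem_nhds_iff.mp hs
  exact ⟨n, trivial, mem_cylinder_iff_eq.mp hxy ▸ hys⟩

theorem Perfect.not_countable {X : Type*} [MetricSpace X] [CompleteSpace X] {C : Set X}
    (hC : Perfect C) (hne : C.Nonempty) : ¬ C.Countable := by
  intro hcount
  obtain ⟨f, hfC, -, hf⟩ := hC.exists_nat_bool_injection hne
  have : Countable (Set.range f) := (hcount.mono hfC).to_subtype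
  have hcantor : Countable (ℕ → Bool) := (Equiv.ofInjective f hf).countable_iff.mpr this
  rw [← Cardinal.mk_le_aleph0_iff] at hcantor
  exact Cardinal.aleph0_lt_continuum.not_ge (by simpa [← Cardinal.power_def] using hcantor)

theorem iterate_shift_apply (k : ℕ) (x : ℕ → Bool) (i : ℕ) : shift^[k] x i = x (i + k) := by
  induction k generalizing x with
  | zero => rfl
  | succ k ih => rw [iterate_succ_apply, ih, shift, add_assoc]

def shiftOrbit (x : ℕ → Bool) : Set (ℕ → Bool) := {y | ∃ k, shift^[k] x = y}

theorem iterate_shift_mem_shiftOrbit (x : ℕ → Bool) (k : ℕ) : shift^[k] x ∈ shiftOrbit x :=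
  ⟨k, rfl⟩

namespace IsRegularlyRecurrent

variable {x : ℕ → Bool}

theorem mem_closure_shiftOrbit (hx : IsRegularlyRecurrent x) {y : ℕ → Bool}
    (hy : y ∈ closure (shiftOrbit x)) : x ∈ closure (shiftOrbit y) := by
  refine (mem_closure_iff_nhds_basis (nhds_basis_cylinder x)).2 fun M _ => ?_
  obtain ⟨p, hp, hrep⟩ := hx M
  obtain ⟨_, ⟨r, rfl⟩, hyr⟩ :=
    (mem_closure_iff_nhds_basis (nhds_basis_cylinder y)).1 hy (M + p) trivial
  -- `y` agrees with `shift^[r] x` on `M + p` letters, so shifting it by `p - r % p` reaches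
  -- `shift^[(r / p + 1) * p] x`, which begins with the same `M` letters as `x`
  have hr : p - r % p + r = (r / p + 1) * p := by
    have := Nat.div_add_mod r p
    have := Nat.mod_lt r hp
    rw [add_one_mul, mul_comm]
    omega
  refine ⟨shift^[p - r % p] y, iterate_shift_mem_shiftOrbit y _, fun i hi => ?_⟩
  rw [iterate_shift_apply, ← hyr _ (by omega), iterate_shift_apply, add_assoc, hr, hrep i hi]

theorem eq_closure_shiftOrbit (hx : IsRegularlyRecurrent x) {K : Set (ℕ → Bool)}
    (hKx : K ⊆ closure (shiftOrbit x)) (hK : K.Nonempty) (hKc : IsClosed K)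
    (hKs : shift '' K ⊆ K) : K = closure (shiftOrbit x) := by
  have hmaps : Set.MapsTo shift K K := Set.mapsTo_iff_image_subset.mpr hKs
  obtain ⟨y, hy⟩ := hK
  have hxK : x ∈ K := by
    refine hKc.closure_subset_iff.2 ?_ (hx.mem_closure_shiftOrbit (hKx hy))
    rintro _ ⟨k, rfl⟩
    exact hmaps.iterate k hy
  refine hKx.antisymm (hKc.closure_subset_iff.2 ?_)
  rintro _ ⟨k, rfl⟩
  exact hmaps.iterate k hxK

theorem injective_iterate_shift (hx : IsRegularlyRecurrent x)
    (haper : ∀ p, 0 < p → ¬ Periodic x p) : Injective (shift^[·] x) := by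
  refine Injective.of_lt_imp_ne fun r s hrs heq => ?_
  obtain ⟨p, rfl⟩ := Nat.exists_eq_add_of_lt hrs
  refine haper (p + 1) p.succ_pos (hx.periodic_of_eventually (r := r) fun m hm => ?_)
  have := congrFun heq (m - r)
  rwa [iterate_shift_apply, iterate_shift_apply, add_assoc, ← add_assoc, Nat.sub_add_cancel hm,
    eq_comm] at this

theorem preperfect_shiftOrbit (hx : IsRegularlyRecurrent x) (hinj : Injective (shift^[·] x)) :
    Preperfect (shiftOrbit x) := by
  rintro _ ⟨r, rfl⟩
  rw [accPt_iff_nhds]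
  intro U hU
  obtain ⟨M, -, hMU⟩ := (nhds_basis_cylinder _).mem_iff.1 hU
  obtain ⟨p, hp, hrep⟩ := hx (r + M)
  refine ⟨shift^[r + p] x, ⟨hMU fun i hi => ?_, iterate_shift_mem_shiftOrbit x _⟩,
    fun h => by simpa [hp.ne'] using hinj h⟩
  rw [iterate_shift_apply, iterate_shift_apply, ← add_assoc, ← one_mul p, hrep _ (by omega)]

theorem not_countable_closure_shiftOrbit (hx : IsRegularlyRecurrent x)
    (haper : ∀ p, 0 < p → ¬ Periodic x p) : ¬ (closure (shiftOrbit x)).Countable :=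
  -- a complete metric inducing the product topology
  letI : MetricSpace (ℕ → Bool) := PiNat.metricSpace
  haveI : @CompleteSpace (ℕ → Bool) PseudoMetricSpace.toUniformSpace := PiNat.completeSpace
  (hx.preperfect_shiftOrbit (hx.injective_iterate_shift haper)).perfect_closure.not_countable
    ⟨x, subset_closure (iterate_shift_mem_shiftOrbit x 0)⟩

end IsRegularlyRecurrent

/-- The set of Morse-type minimal points (points whose orbit closure under
the shift map is minimal and uncountable) is dense in `ℕ → Bool`. -/
theorem morseTypeMinimal_dense :
    Dense {x : ℕ → Bool |
      (∀ K : Set (ℕ → Bool),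
          K ⊆ closure {y : ℕ → Bool | ∃ k : ℕ, shift^[k] x = y} →
          K.Nonempty → IsClosed K → shift '' K ⊆ K →
          K = closure {y : ℕ → Bool | ∃ k : ℕ, shift^[k] x = y}) ∧
      ¬ (closure {y : ℕ → Bool | ∃ k : ℕ, shift^[k] x = y}).Countable} := by
  intro w
  refine (mem_closure_iff_nhds_basis (nhds_basis_cylinder w)).2 fun n _ => ?_
  have hrec : IsRegularlyRecurrent (fillHoles w n periodDoubling) :=
    isRegularlyRecurrent_fillHoles isRegularlyRecurrent_periodDoubling w n
  have haper : ∀ p, 0 < p → ¬ Periodic (fillHoles w n periodDoubling) p := fun _ hp hper =>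
    periodDoubling_not_periodic hp hper.of_fillHoles
  exact ⟨_, ⟨fun K => hrec.eq_closure_shiftOrbit, hrec.not_countable_closure_shiftOrbit haper⟩,
    fun _ => fillHoles_of_lt⟩
end
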